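/- arXiv:2203.11837 — 7 statements merged into one kernel-verified Lean document; each statement's English description precedes it below -/
import Mathlib

section
/- For matrices A ∈ M_{m,n}(ℂ) and B ∈ M_{n,m}(ℂ), if there exists a Hermitian matrix P ∈ M_{n+m}(ℂ) such that [I, -A*] P [I; -A] ≺ 0 (negative definite) and [B*, I] P [B; I] ⪰ 0 (positive semidefinite), then det(I_m + A B) ≠ 0. -/
/-!
If `(1 + A B) x = 0` with `x ≠ 0`, then `y := B x` is nonzero and `x = -A y`, so the single vector
`(y, x) = [B; I] x = [I; -A] y` lies in the ranges of both block matrices. The quadratic form of `P`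
is nonnegative there by the second hypothesis and negative by the first.
-/

open Matrix ComplexOrder

namespace Matrix

variable {k l m n R : Type*} [Fintype k] [Fintype l] [Fintype m] [Fintype n]

theorem star_dotProduct_conjTranspose_mul_mul_mulVec [CommSemiring R] [StarRing R]
    (P : Matrix m m R) (M : Matrix m k R) (x : k → R) :
    star x ⬝ᵥ (Mᴴ * P * M) *ᵥ x = star (M *ᵥ x) ⬝ᵥ P *ᵥ (M *ᵥ x) := by
  rw [← mulVec_mulVec, ← mulVec_mulVec, dotProduct_mulVec, ← star_mulVec]

theorem mulVec_ne_mulVec_of_negDef_of_posSemidef [CommRing R] [PartialOrder R] [StarRing R]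
    [IsOrderedAddMonoid R] {P : Matrix m m R} {M : Matrix m k R} {N : Matrix m l R}
    (hN : (-(Nᴴ * P * N)).PosDef) (hM : (Mᴴ * P * M).PosSemidef) (x : k → R) {y : l → R}
    (hy : y ≠ 0) : M *ᵥ x ≠ N *ᵥ y := by
  intro hxy
  have hnonneg : 0 ≤ star (M *ᵥ x) ⬝ᵥ P *ᵥ (M *ᵥ x) := by
    simpa only [star_dotProduct_conjTranspose_mul_mul_mulVec] using hM.dotProduct_mulVec_nonneg x
  have hneg : 0 < -(star (N *ᵥ y) ⬝ᵥ P *ᵥ (N *ᵥ y)) := by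
    simpa only [neg_mulVec, dotProduct_neg, star_dotProduct_conjTranspose_mul_mul_mulVec] using
      hN.dotProduct_mulVec_pos hy
  rw [← hxy] at hneg
  exact (neg_pos.mp hneg).not_ge hnonneg

variable [Ring R] [DecidableEq m] {A : Matrix m n R} {B : Matrix n m R}
  {x : m → R}

theorem eq_neg_mulVec_mulVec_of_one_add_mul_mulVec_eq_zero (hx : (1 + A * B) *ᵥ x = 0) :
    x = -(A *ᵥ B *ᵥ x) := by
  rwa [add_mulVec, one_mulVec, ← mulVec_mulVec, add_eq_zero_iff_eq_neg] at hx

theorem mulVec_ne_zero_of_one_add_mul_mulVec_eq_zero (hx : (1 + A * B) *ᵥ x = 0)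
    (hx₀ : x ≠ 0) : B *ᵥ x ≠ 0 := by
  intro hBx
  rw [eq_neg_mulVec_mulVec_of_one_add_mul_mulVec_eq_zero hx, hBx, mulVec_zero, neg_zero] at hx₀
  exact hx₀ rfl

variable [DecidableEq n] in
theorem fromRows_mulVec_eq_of_one_add_mul_mulVec_eq_zero (hx : (1 + A * B) *ᵥ x = 0) :
    fromRows B 1 *ᵥ x = fromRows 1 (-A) *ᵥ (B *ᵥ x) := by
  rw [fromRows_mulVec, fromRows_mulVec, one_mulVec, one_mulVec, neg_mulVec,
    ← eq_neg_mulVec_mulVec_of_one_add_mul_mulVec_eq_zero hx]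

end Matrix

theorem stmt1_general {m n : ℕ} (A : Matrix (Fin m) (Fin n) ℂ) (B : Matrix (Fin n) (Fin m) ℂ)
    (P : Matrix (Fin n ⊕ Fin m) (Fin n ⊕ Fin m) ℂ)
    (h1 : (-((Matrix.fromRows (1 : Matrix (Fin n) (Fin n) ℂ) (-A))ᴴ * P *
        Matrix.fromRows (1 : Matrix (Fin n) (Fin n) ℂ) (-A))).PosDef)
    (h2 : ((Matrix.fromRows B (1 : Matrix (Fin m) (Fin m) ℂ))ᴴ * P *
        Matrix.fromRows B (1 : Matrix (Fin m) (Fin m) ℂ)).PosSemidef) :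
    (1 + A * B).det ≠ 0 := by
  intro hdet
  obtain ⟨x, hx₀, hx⟩ := exists_mulVec_eq_zero_iff.2 hdet
  exact mulVec_ne_mulVec_of_negDef_of_posSemidef h1 h2 x
    (mulVec_ne_zero_of_one_add_mul_mulVec_eq_zero hx hx₀)
    (fromRows_mulVec_eq_of_one_add_mul_mulVec_eq_zero hx)

theorem stmt1 {m n : ℕ} (A : Matrix (Fin m) (Fin n) ℂ) (B : Matrix (Fin n) (Fin m) ℂ)
    (P : Matrix (Fin n ⊕ Fin m) (Fin n ⊕ Fin m) ℂ) (hP : P.IsHermitian)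
    (h1 : (-((Matrix.fromRows (1 : Matrix (Fin n) (Fin n) ℂ) (-A))ᴴ * P *
        Matrix.fromRows (1 : Matrix (Fin n) (Fin n) ℂ) (-A))).PosDef)
    (h2 : ((Matrix.fromRows B (1 : Matrix (Fin m) (Fin m) ℂ))ᴴ * P *
        Matrix.fromRows B (1 : Matrix (Fin m) (Fin m) ℂ)).PosSemidef) :
    (1 + A * B).det ≠ 0 :=
  stmt1_general A B P h1 h2
end

section
/- Let A, B be invertible n×n complex matrices. If there exists an invertible matrix H such that H A and H* B are both strictly accretive, then det(I + τ A B) ≠ 0 for every real τ ≥ 0. -/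
open Matrix ComplexOrder

/-!
If `(1 + τ A B) v = 0` with `v ≠ 0`, then `y = B v ≠ 0` and `v = -τ A y`, so
`Re ⟪v, H* B v⟫ = Re ⟪H v, y⟫ = -τ Re ⟪H A y, y⟫ ≤ 0` by accretivity of `H A`,
contradicting the strict accretivity of `H* B`.
-/

section Accretive

variable {𝕜 : Type*} [RCLike 𝕜] {n : Type*} [Fintype n]

lemma star_dotProduct_conjTranspose_mulVec (M : Matrix n n 𝕜) (x y : n → 𝕜) :
    star x ⬝ᵥ (Mᴴ *ᵥ y) = star (star y ⬝ᵥ (M *ᵥ x)) := by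
  rw [star_dotProduct, star_mulVec, conjTranspose_conjTranspose, dotProduct_mulVec]

lemma star_dotProduct_add_conjTranspose_mulVec (M : Matrix n n 𝕜) (x : n → 𝕜) :
    star x ⬝ᵥ ((M + Mᴴ) *ᵥ x) = 2 * RCLike.re (star x ⬝ᵥ (M *ᵥ x)) := by
  rw [add_mulVec, dotProduct_add, star_dotProduct_conjTranspose_mulVec, ← RCLike.add_conj]
  rfl

lemma re_star_dotProduct_mulVec_pos_of_posDef_add_conjTranspose {M : Matrix n n 𝕜}
    (hM : (M + Mᴴ).PosDef) {x : n → 𝕜} (hx : x ≠ 0) :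
    0 < RCLike.re (star x ⬝ᵥ (M *ᵥ x)) := by
  have h := (RCLike.pos_iff.mp (hM.dotProduct_mulVec_pos hx)).1
  rw [star_dotProduct_add_conjTranspose_mulVec] at h
  simpa using h

variable [DecidableEq n]

theorem det_one_add_smul_mul_ne_zero_of_posDef {A B H : Matrix n n 𝕜} (hB : IsUnit B)
    (hHA : (H * A + (H * A)ᴴ).PosDef) (hHB : (Hᴴ * B + (Hᴴ * B)ᴴ).PosDef)
    {τ : ℝ} (hτ : 0 ≤ τ) : (1 + (τ : 𝕜) • (A * B)).det ≠ 0 := by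
  intro hdet
  obtain ⟨v, hv, hker⟩ := exists_mulVec_eq_zero_iff.mpr hdet
  have hy : B *ᵥ v ≠ 0 := fun h =>
    hv (mulVec_injective_iff_isUnit.mpr hB (h.trans (mulVec_zero B).symm))
  have hv_eq : v = -(τ : 𝕜) • (A *ᵥ (B *ᵥ v)) := by
    rw [add_mulVec, one_mulVec, smul_mulVec, ← mulVec_mulVec] at hker
    exact eq_neg_of_add_eq_zero_left hker |>.trans (neg_smul _ _).symm
  have hform : RCLike.re (star v ⬝ᵥ ((Hᴴ * B) *ᵥ v)) =
      -τ * RCLike.re (star (B *ᵥ v) ⬝ᵥ ((H * A) *ᵥ (B *ᵥ v))) := by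
    rw [← mulVec_mulVec, star_dotProduct_conjTranspose_mulVec]
    generalize B *ᵥ v = y at hv_eq ⊢
    rw [hv_eq, mulVec_smul, mulVec_mulVec, dotProduct_smul, RCLike.star_def, RCLike.conj_re,
      smul_eq_mul, ← RCLike.ofReal_neg, RCLike.re_ofReal_mul]
  have hpos_y := re_star_dotProduct_mulVec_pos_of_posDef_add_conjTranspose hHA hy
  have hpos_v := re_star_dotProduct_mulVec_pos_of_posDef_add_conjTranspose hHB hv
  rw [hform] at hpos_v
  nlinarith

end Accretive

theorem stmt3_general {n : ℕ} (A B : Matrix (Fin n) (Fin n) ℂ) (hB : IsUnit B)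
    (H : Matrix (Fin n) (Fin n) ℂ)
    (h1 : (H * A + (H * A)ᴴ).PosDef) (h2 : (Hᴴ * B + (Hᴴ * B)ᴴ).PosDef) :
    ∀ τ : ℝ, 0 ≤ τ → (1 + (τ : ℂ) • (A * B)).det ≠ 0 :=
  fun _ hτ => det_one_add_smul_mul_ne_zero_of_posDef hB h1 h2 hτ

theorem stmt3 {n : ℕ} (A B : Matrix (Fin n) (Fin n) ℂ) (hA : IsUnit A) (hB : IsUnit B)
    (H : Matrix (Fin n) (Fin n) ℂ) (hH : IsUnit H)
    (h1 : (H * A + (H * A)ᴴ).PosDef) (h2 : (Hᴴ * B + (Hᴴ * B)ᴴ).PosDef) :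
    ∀ τ : ℝ, 0 ≤ τ → (1 + (τ : ℂ) • (A * B)).det ≠ 0 :=
  stmt3_general A B hB H h1 h2
end

section
/- Let A, B ∈ M_n(ℂ) and suppose there exists H ∈ M_n(ℂ) and ε > 0 such that H A + A* H* ⪰ ε A* A and H* B + B* H ⪰ 0. Then det(I + τ A B) ≠ 0 for every real τ ≥ 0. -/
/-!
A kernel vector `x ≠ 0` of `1 + τ A B` gives `y = B x` with `τ A y = -x`. The second inequality,
tested on `x`, says `Re ⟨y, H x⟩ ≥ 0`. The first, tested on `y` and scaled by `τ²`, turns into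
`-2 τ Re ⟨y, H x⟩ - ε ‖x‖² ≥ 0`, which is impossible.
-/

open Matrix ComplexOrder

namespace Matrix

variable {ι 𝕜 : Type*} [Fintype ι] [RCLike 𝕜]

theorem star_dotProduct_conjTranspose_mul_mulVec (M N : Matrix ι ι 𝕜) (v : ι → 𝕜) :
    star v ⬝ᵥ ((Mᴴ * N) *ᵥ v) = star (M *ᵥ v) ⬝ᵥ (N *ᵥ v) := by
  rw [← mulVec_mulVec, dotProduct_mulVec, vecMul_conjTranspose, star_star]

theorem re_star_dotProduct_add_conjTranspose_mulVec (M : Matrix ι ι 𝕜) (v : ι → 𝕜) :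
    RCLike.re (star v ⬝ᵥ ((M + Mᴴ) *ᵥ v)) = 2 * RCLike.re (star v ⬝ᵥ (M *ᵥ v)) := by
  have hconj : star v ⬝ᵥ (Mᴴ *ᵥ v) = star (star v ⬝ᵥ (M *ᵥ v)) := by
    rw [dotProduct_mulVec, ← star_mulVec, star_dotProduct]
  rw [add_mulVec, dotProduct_add, map_add, hconj, RCLike.star_def, RCLike.conj_re, two_mul]

namespace PosSemidef

theorem re_dotProduct_le_two_mul_re {M N : Matrix ι ι 𝕜} (h : (M + Mᴴ - N).PosSemidef)
    (v : ι → 𝕜) :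
    RCLike.re (star v ⬝ᵥ (N *ᵥ v)) ≤ 2 * RCLike.re (star v ⬝ᵥ (M *ᵥ v)) := by
  have hv := h.re_dotProduct_nonneg v
  rw [sub_mulVec, dotProduct_sub, map_sub, re_star_dotProduct_add_conjTranspose_mulVec] at hv
  linarith

theorem re_dotProduct_nonneg_of_add_conjTranspose {M : Matrix ι ι 𝕜} (h : (M + Mᴴ).PosSemidef)
    (v : ι → 𝕜) : 0 ≤ RCLike.re (star v ⬝ᵥ (M *ᵥ v)) := by
  have hv := h.re_dotProduct_nonneg v
  rw [re_star_dotProduct_add_conjTranspose_mulVec] at hv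
  linarith

end PosSemidef

end Matrix

theorem stmt4 {n : ℕ} (A B H : Matrix (Fin n) (Fin n) ℂ) (ε : ℝ) (hε : 0 < ε)
    (h1 : (H * A + Aᴴ * Hᴴ - (ε : ℂ) • (Aᴴ * A)).PosSemidef)
    (h2 : (Hᴴ * B + Bᴴ * H).PosSemidef) :
    ∀ τ : ℝ, 0 ≤ τ → (1 + (τ : ℂ) • (A * B)).det ≠ 0 := by
  intro τ hτ hdet
  obtain ⟨x, hx, hkernel⟩ := exists_mulVec_eq_zero_iff.mpr hdet
  set y := B *ᵥ x
  have hAy : (τ : ℂ) • (A *ᵥ y) = -x := by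
    rw [add_mulVec, one_mulVec, smul_mulVec, ← mulVec_mulVec] at hkernel
    exact eq_neg_of_add_eq_zero_right hkernel
  have hB : 0 ≤ (star y ⬝ᵥ (H *ᵥ x)).re := by
    have h := PosSemidef.re_dotProduct_nonneg_of_add_conjTranspose (M := Bᴴ * H)
      (by rwa [conjTranspose_mul, conjTranspose_conjTranspose, add_comm]) x
    rwa [star_dotProduct_conjTranspose_mul_mulVec] at h
  have hA : ε * (star (A *ᵥ y) ⬝ᵥ (A *ᵥ y)).re ≤ 2 * (star y ⬝ᵥ (H *ᵥ (A *ᵥ y))).re := by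
    rw [← conjTranspose_mul] at h1
    have h := h1.re_dotProduct_le_two_mul_re y
    rwa [smul_mulVec, dotProduct_smul, star_dotProduct_conjTranspose_mul_mulVec, ← mulVec_mulVec,
      smul_eq_mul, RCLike.re_to_complex, RCLike.re_to_complex, Complex.re_ofReal_mul] at h
  have hx_pos : 0 < (star x ⬝ᵥ x).re :=
    (Complex.pos_iff.mp (dotProduct_star_self_pos_iff.mpr hx)).1
  have hcross : τ * (star y ⬝ᵥ (H *ᵥ (A *ᵥ y))).re = -(star y ⬝ᵥ (H *ᵥ x)).re := by
    rw [← Complex.re_ofReal_mul, ← smul_eq_mul, ← dotProduct_smul, ← mulVec_smul, hAy,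
      mulVec_neg, dotProduct_neg, Complex.neg_re]
  have hnorm : τ ^ 2 * (star (A *ᵥ y) ⬝ᵥ (A *ᵥ y)).re = (star x ⬝ᵥ x).re := by
    rw [← neg_neg x, ← hAy, star_neg, neg_dotProduct, dotProduct_neg, neg_neg, star_smul,
      smul_dotProduct, dotProduct_smul, smul_smul, smul_eq_mul, Complex.star_def,
      Complex.conj_ofReal, ← Complex.ofReal_mul, Complex.re_ofReal_mul, sq]
  nlinarith [mul_nonneg hτ hB, mul_le_mul_of_nonneg_left hA (sq_nonneg τ)]
end

section
/- Let A, B ∈ M_n(ℂ) with A invertible, and suppose there exists an invertible H ∈ M_n(ℂ) such that H A is strictly accretive and H* B is accretive. Then A B has no eigenvalue on the strictly negative real axis. -/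
open Matrix ComplexOrder

/-! Let `A B v = r v` with `r < 0` and `v ≠ 0`, and put `w = B v`, so that `A w = r v` and `w ≠ 0`.
Since `r` is real, `r ⟪v, (H*B + B*H) v⟫ = 2 r Re ⟪H v, w⟫ = 2 Re ⟪H A w, w⟫ = ⟪w, (HA + (HA)*) w⟫`.
The left side is `≤ 0` because `H*B` is accretive, the right side is `> 0` because `HA` is
strictly accretive. -/

namespace Matrix

variable {m n K R : Type*} [Fintype m]

theorem exists_mulVec_eq_smul_of_mem_spectrum [Field K] [DecidableEq m] {M : Matrix m m K}
    {μ : K} (h : μ ∈ spectrum K M) : ∃ v ≠ 0, M *ᵥ v = μ • v := by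
  rw [← spectrum_toLin', ← Module.End.hasEigenvalue_iff_mem_spectrum] at h
  obtain ⟨v, hv⟩ := h.exists_hasEigenvector
  exact ⟨v, hv.2, hv.apply_eq_smul⟩

section CommRing

variable [CommRing R] [StarRing R]

theorem star_dotProduct_conjTranspose_mulVec [Fintype n] (M : Matrix n m R) (x : m → R)
    (y : n → R) : star x ⬝ᵥ (Mᴴ *ᵥ y) = star (M *ᵥ x) ⬝ᵥ y := by
  rw [star_mulVec, dotProduct_mulVec, vecMul_conjTranspose]

theorem star_dotProduct_add_conjTranspose_mulVec (M : Matrix m m R) (x : m → R) :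
    star x ⬝ᵥ ((M + Mᴴ) *ᵥ x) = star x ⬝ᵥ (M *ᵥ x) + star (M *ᵥ x) ⬝ᵥ x := by
  rw [add_mulVec, dotProduct_add, star_dotProduct_conjTranspose_mulVec]

theorem mul_star_dotProduct_add_conjTranspose_mulVec_eq {A B H : Matrix m m R} {r : R}
    (hr : IsSelfAdjoint r) {v : m → R} (hv : A *ᵥ B *ᵥ v = r • v) :
    r * (star v ⬝ᵥ ((Hᴴ * B + (Hᴴ * B)ᴴ) *ᵥ v)) =
      star (B *ᵥ v) ⬝ᵥ ((H * A + (H * A)ᴴ) *ᵥ B *ᵥ v) := by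
  set w := B *ᵥ v
  have hHAw : (H * A) *ᵥ w = r • H *ᵥ v := by rw [← mulVec_mulVec, hv, mulVec_smul]
  have hHv : star v ⬝ᵥ (Hᴴ *ᵥ w) = star (H *ᵥ v) ⬝ᵥ w :=
    star_dotProduct_conjTranspose_mulVec H v w
  have hHw : star (Hᴴ *ᵥ w) ⬝ᵥ v = star w ⬝ᵥ (H *ᵥ v) := by
    simpa only [conjTranspose_conjTranspose] using
      (star_dotProduct_conjTranspose_mulVec Hᴴ w v).symm
  rw [star_dotProduct_add_conjTranspose_mulVec, star_dotProduct_add_conjTranspose_mulVec, hHAw,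
    ← mulVec_mulVec, hHv, hHw, star_smul, hr.star_eq, dotProduct_smul, smul_dotProduct,
    smul_eq_mul, smul_eq_mul]
  ring

end CommRing

end Matrix

theorem stmt8_general {n : ℕ} (A B H : Matrix (Fin n) (Fin n) ℂ)
    (h1 : (H * A + (H * A)ᴴ).PosDef) (h2 : (Hᴴ * B + (Hᴴ * B)ᴴ).PosSemidef) :
    ∀ r : ℝ, r < 0 → (r : ℂ) ∉ spectrum ℂ (A * B) := by
  intro r hr hmem
  obtain ⟨v, hv0, hv⟩ := exists_mulVec_eq_smul_of_mem_spectrum hmem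
  rw [← mulVec_mulVec] at hv
  have hr0 : (r : ℂ) ≠ 0 := by exact_mod_cast hr.ne
  have hw0 : B *ᵥ v ≠ 0 := fun hw ↦ hv0 <|
    (smul_eq_zero.1 (by rw [← hv, hw, mulVec_zero])).resolve_left hr0
  have hform := mul_star_dotProduct_add_conjTranspose_mulVec_eq (H := H)
    (Complex.conj_ofReal r) hv
  have hpos := h1.dotProduct_mulVec_pos hw0
  rw [← hform] at hpos
  exact hpos.not_ge <| mul_nonpos_of_nonpos_of_nonneg (by exact_mod_cast hr.le)
    (h2.dotProduct_mulVec_nonneg v)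

theorem stmt8 {n : ℕ} (A B H : Matrix (Fin n) (Fin n) ℂ) (hA : IsUnit A) (hH : IsUnit H)
    (h1 : (H * A + (H * A)ᴴ).PosDef) (h2 : (Hᴴ * B + (Hᴴ * B)ᴴ).PosSemidef) :
    ∀ r : ℝ, r < 0 → (r : ℂ) ∉ spectrum ℂ (A * B) :=
  stmt8_general A B H h1 h2
end

section
/- Given A ∈ M_{m,n}(ℂ) and B ∈ M_{n,m}(ℂ), if there exist Hermitian matrices M ∈ M_m(ℂ) and N ∈ M_n(ℂ) such that A* M A ≺ N and B* N B ≺ M, then A B has no eigenvalue on the unit circle. -/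
open Matrix ComplexOrder

/-! Adding `Bᴴ (N - Aᴴ M A) B ⪰ 0` to `M - Bᴴ N B ≻ 0` gives the Stein inequality
`M - (AB)ᴴ M (AB) ≻ 0`. At an eigenvector `v` of `AB` with eigenvalue `z` its quadratic form is
`(1 - |z|²) vᴴ M v`, which vanishes when `|z| = 1`. -/

namespace Matrix

variable {m n R : Type*} [Fintype m] [Fintype n]

theorem PosDef.sub_conjTranspose_mul_mul_mul [Ring R] [PartialOrder R] [StarRing R]
    [AddLeftMono R] {A : Matrix m n R} {B : Matrix n m R} {M : Matrix m m R}
    {N : Matrix n n R} (h1 : (N - Aᴴ * M * A).PosDef) (h2 : (M - Bᴴ * N * B).PosDef) :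
    (M - (A * B)ᴴ * M * (A * B)).PosDef := by
  have hsplit : M - (A * B)ᴴ * M * (A * B) = (M - Bᴴ * N * B) + Bᴴ * (N - Aᴴ * M * A) * B := by
    simp only [conjTranspose_mul, Matrix.mul_sub, Matrix.sub_mul, Matrix.mul_assoc]
    abel
  rw [hsplit]
  exact h2.add_posSemidef (h1.posSemidef.conjTranspose_mul_mul_same B)

theorem star_dotProduct_conjTranspose_mul_mul_mulVec_of_mulVec_eq_smul [CommRing R] [StarRing R]
    {C M : Matrix n n R} {v : n → R} {z : R} (hv : C *ᵥ v = z • v) :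
    star v ⬝ᵥ ((Cᴴ * M * C) *ᵥ v) = star z * z * (star v ⬝ᵥ (M *ᵥ v)) := by
  rw [← mulVec_mulVec, ← mulVec_mulVec, dotProduct_mulVec, ← star_mulVec, hv, mulVec_smul,
    star_smul, smul_dotProduct, dotProduct_smul, smul_eq_mul, smul_eq_mul, mul_assoc]

theorem PosDef.star_mul_self_ne_one_of_mulVec_eq_smul [CommRing R] [PartialOrder R] [StarRing R]
    {C M : Matrix n n R} (hC : (M - Cᴴ * M * C).PosDef) {v : n → R} (hv0 : v ≠ 0) {z : R}
    (hv : C *ᵥ v = z • v) : star z * z ≠ 1 := by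
  intro hz
  have hzero : star v ⬝ᵥ ((M - Cᴴ * M * C) *ᵥ v) = 0 := by
    rw [sub_mulVec, dotProduct_sub,
      star_dotProduct_conjTranspose_mul_mul_mulVec_of_mulVec_eq_smul hv, hz, one_mul, sub_self]
  exact (hC.dotProduct_mulVec_pos hv0).ne' hzero

theorem PosDef.norm_ne_one_of_mem_spectrum {𝕜 : Type*} [RCLike 𝕜] [DecidableEq n]
    {C M : Matrix n n 𝕜} (hC : (M - Cᴴ * M * C).PosDef) {z : 𝕜} (hz : z ∈ spectrum 𝕜 C) :
    ‖z‖ ≠ 1 := by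
  rw [← spectrum_toLin', ← Module.End.hasEigenvalue_iff_mem_spectrum] at hz
  obtain ⟨v, hv⟩ := hz.exists_hasEigenvector
  intro hnorm
  refine hC.star_mul_self_ne_one_of_mulVec_eq_smul hv.2 (z := z) ?_ ?_
  · simpa using hv.apply_eq_smul
  · rw [RCLike.star_def, RCLike.conj_mul, hnorm]; simp

end Matrix

theorem stmt10_general {m n : ℕ} (A : Matrix (Fin m) (Fin n) ℂ) (B : Matrix (Fin n) (Fin m) ℂ)
    (M : Matrix (Fin m) (Fin m) ℂ) (N : Matrix (Fin n) (Fin n) ℂ)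
    (h1 : (N - Aᴴ * M * A).PosDef) (h2 : (M - Bᴴ * N * B).PosDef) :
    ∀ z ∈ spectrum ℂ (A * B), ‖z‖ ≠ 1 := fun _ hz =>
  (h1.sub_conjTranspose_mul_mul_mul h2).norm_ne_one_of_mem_spectrum hz

theorem stmt10 {m n : ℕ} (A : Matrix (Fin m) (Fin n) ℂ) (B : Matrix (Fin n) (Fin m) ℂ)
    (M : Matrix (Fin m) (Fin m) ℂ) (N : Matrix (Fin n) (Fin n) ℂ)
    (hM : M.IsHermitian) (hN : N.IsHermitian)
    (h1 : (N - Aᴴ * M * A).PosDef) (h2 : (M - Bᴴ * N * B).PosDef) :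
    ∀ z ∈ spectrum ℂ (A * B), ‖z‖ ≠ 1 :=
  stmt10_general A B M N h1 h2
end

section
/- Given A, B ∈ M_n(ℂ), if det(I + U A V B) ≠ 0 for all unitary U, V ∈ M_n(ℂ), then either σ₁(A) σ₁(B) < 1 or σ_min(A) σ_min(B) > 1. -/
open Matrix ComplexOrder

/-- The largest singular value of a complex matrix: the square root of the
largest eigenvalue of `Aᴴ * A`. -/
noncomputable def maxSV {m n : ℕ} (A : Matrix (Fin m) (Fin n) ℂ) : ℝ :=
  Real.sqrt (⨆ i, (Matrix.posSemidef_conjTranspose_mul_self A).1.eigenvalues i)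

/-- The smallest singular value of a complex matrix: the square root of the
smallest eigenvalue of `Aᴴ * A`. -/
noncomputable def minSV {m n : ℕ} (A : Matrix (Fin m) (Fin n) ℂ) : ℝ :=
  Real.sqrt (⨅ i, (Matrix.posSemidef_conjTranspose_mul_self A).1.eigenvalues i)

/-!
If `x`, `y` are unit vectors with `‖A y‖ * ‖B x‖ = 1`, pick unitaries `V` sending `B x` to
`‖B x‖ • y` and `U` sending `‖B x‖ • A y` (also a unit vector) to `-x`; then `U A V B x = -x`,
so `1 + U A V B` is singular. Such `x`, `y` exist as soon as
`σ_min(A) σ_min(B) ≤ 1 ≤ σ₁(A) σ₁(B)`: on the unit sphere `‖A x‖` attains `σ_min(A)` and `σ₁(A)`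
at eigenvectors of `Aᴴ A`, and the product of two unit spheres is connected, so the intermediate
value theorem applies to `(x, y) ↦ ‖A x‖ * ‖B y‖`.
-/

section RCLike

variable {𝕜 : Type*} [RCLike 𝕜]

lemma exists_orthonormalBasis_apply_eq {E : Type*} [NormedAddCommGroup E] [InnerProductSpace 𝕜 E]
    [FiniteDimensional 𝕜 E] {ι : Type*} [Fintype ι] (hι : Module.finrank 𝕜 E = Fintype.card ι)
    {x : E} (hx : ‖x‖ = 1) (i : ι) : ∃ b : OrthonormalBasis ι 𝕜 E, b i = x := by
  have hx' : Orthonormal 𝕜 (({i} : Set ι).domRestrict fun _ ↦ x) := by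
    rw [orthonormal_iff_ite]
    rintro ⟨j, rfl⟩ ⟨k, rfl⟩
    simp [hx]
  obtain ⟨b, hb⟩ := hx'.exists_orthonormalBasis_extension_of_card_eq hι
  exact ⟨b, hb i rfl⟩

lemma exists_linearIsometryEquiv_apply_eq {E : Type*} [NormedAddCommGroup E]
    [InnerProductSpace 𝕜 E] [FiniteDimensional 𝕜 E] {x y : E} (h : ‖x‖ = ‖y‖) :
    ∃ f : E ≃ₗᵢ[𝕜] E, f x = y := by
  rcases eq_or_ne x 0 with rfl | hx
  · exact ⟨.refl 𝕜 E, by simpa [eq_comm] using h⟩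
  have hy : y ≠ 0 := norm_ne_zero_iff.mp (h ▸ norm_ne_zero_iff.mpr hx)
  have i : Fin (Module.finrank 𝕜 E) := ⟨0, Module.finrank_pos_iff_exists_ne_zero.mpr ⟨x, hx⟩⟩
  obtain ⟨b₁, hb₁⟩ := exists_orthonormalBasis_apply_eq (Fintype.card_fin _).symm
    (norm_smul_inv_norm (𝕜 := 𝕜) hx) i
  obtain ⟨b₂, hb₂⟩ := exists_orthonormalBasis_apply_eq (Fintype.card_fin _).symm
    (norm_smul_inv_norm (𝕜 := 𝕜) hy) i
  refine ⟨b₁.equiv b₂ (.refl _), ?_⟩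
  have := b₁.equiv_apply_basis b₂ (.refl _) i
  rwa [hb₁, Equiv.refl_apply, hb₂, map_smul, h, smul_right_inj (by simpa using hy)] at this

variable {m n ι : Type*} [Fintype m] [DecidableEq m] [Fintype n] [DecidableEq n]
  [Fintype ι] [DecidableEq ι]

lemma exists_mem_unitaryGroup_toEuclideanLin_eq {x y : EuclideanSpace 𝕜 ι} (h : ‖x‖ = ‖y‖) :
    ∃ U ∈ unitaryGroup ι 𝕜, U.toEuclideanLin x = y := by
  obtain ⟨f, hf⟩ := exists_linearIsometryEquiv_apply_eq (𝕜 := 𝕜) h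
  let b := EuclideanSpace.basisFun ι 𝕜
  refine ⟨LinearMap.toMatrix b.toBasis b.toBasis f.toLinearEquiv,
    f.toMatrix_mem_unitaryGroup b b, ?_⟩
  rw [toEuclideanLin_eq_toLin_orthonormal, toLin_toMatrix]
  exact hf

lemma exists_det_one_add_mul_eq_zero (A B : Matrix ι ι 𝕜) {x y : EuclideanSpace 𝕜 ι}
    (hx : ‖x‖ = 1) (hy : ‖y‖ = 1) (hxy : ‖A.toEuclideanLin y‖ * ‖B.toEuclideanLin x‖ = 1) :
    ∃ U ∈ unitaryGroup ι 𝕜, ∃ V ∈ unitaryGroup ι 𝕜, (1 + U * A * V * B).det = 0 := by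
  set t : 𝕜 := (‖B.toEuclideanLin x‖ : 𝕜)
  obtain ⟨V, hV, hVB⟩ := exists_mem_unitaryGroup_toEuclideanLin_eq
    (x := B.toEuclideanLin x) (y := t • y) (by simp [t, norm_smul, hy])
  obtain ⟨U, hU, hUA⟩ := exists_mem_unitaryGroup_toEuclideanLin_eq
    (x := A.toEuclideanLin (t • y)) (y := -x) (by simp [t, norm_smul, mul_comm, hxy, hx])
  refine ⟨U, hU, V, hV, exists_mulVec_eq_zero_iff.mp ⟨x, ?_, ?_⟩⟩
  · simpa using ne_zero_of_norm_ne_zero (a := x) (by simp [hx])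
  · have hVB' := congrArg WithLp.ofLp hVB
    have hUA' := congrArg WithLp.ofLp hUA
    simp only [toLpLin_apply, WithLp.ofLp_toLp] at hVB' hUA'
    rw [add_mulVec, one_mulVec, ← mulVec_mulVec, ← mulVec_mulVec, ← mulVec_mulVec, hVB', hUA']
    simp

lemma norm_toEuclideanLin_sq (A : Matrix m n 𝕜) (x : EuclideanSpace 𝕜 n) :
    ‖A.toEuclideanLin x‖ ^ 2 = RCLike.re (star (x : n → 𝕜) ⬝ᵥ (Aᴴ * A) *ᵥ x) := by
  rw [@norm_sq_eq_re_inner 𝕜, ← LinearMap.adjoint_inner_right,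
    ← toEuclideanLin_conjTranspose_eq_adjoint, EuclideanSpace.inner_eq_star_dotProduct,
    dotProduct_comm]
  simp [toLpLin_apply, mulVec_mulVec]

lemma norm_toEuclideanLin_eigenvectorBasis (A : Matrix m n 𝕜) (i : n) :
    ‖A.toEuclideanLin ((posSemidef_conjTranspose_mul_self A).1.eigenvectorBasis i)‖ =
      √((posSemidef_conjTranspose_mul_self A).1.eigenvalues i) := by
  rw [IsHermitian.eigenvalues_eq, ← norm_toEuclideanLin_sq, Real.sqrt_sq (norm_nonneg _)]

end RCLike

lemma one_lt_rank_real_euclideanSpace {ι : Type*} [Fintype ι] [Nonempty ι] :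
    1 < Module.rank ℝ (EuclideanSpace ℂ ι) := by
  rw [rank_real_of_complex, ← Module.finrank_eq_rank, finrank_euclideanSpace]
  have := Fintype.card_pos (α := ι)
  norm_cast
  omega

lemma isConnected_sphere_euclideanSpace {ι : Type*} [Fintype ι] [Nonempty ι] :
    IsConnected (Metric.sphere (0 : EuclideanSpace ℂ ι) 1) :=
  isConnected_sphere one_lt_rank_real_euclideanSpace 0 zero_le_one

lemma maxSV_of_fin_zero {m : ℕ} (A : Matrix (Fin m) (Fin 0) ℂ) : maxSV A = 0 := by
  rw [maxSV, Real.iSup_of_isEmpty, Real.sqrt_zero]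

lemma exists_mem_sphere_norm_toEuclideanLin_eq_maxSV {m n : ℕ} [NeZero n]
    (A : Matrix (Fin m) (Fin n) ℂ) :
    ∃ x ∈ Metric.sphere (0 : EuclideanSpace ℂ (Fin n)) 1, ‖A.toEuclideanLin x‖ = maxSV A := by
  obtain ⟨i, hi⟩ := exists_eq_ciSup_of_finite
    (f := (posSemidef_conjTranspose_mul_self A).1.eigenvalues)
  refine ⟨(posSemidef_conjTranspose_mul_self A).1.eigenvectorBasis i, by simp, ?_⟩
  rw [norm_toEuclideanLin_eigenvectorBasis, hi, maxSV]

lemma exists_mem_sphere_norm_toEuclideanLin_eq_minSV {m n : ℕ} [NeZero n]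
    (A : Matrix (Fin m) (Fin n) ℂ) :
    ∃ x ∈ Metric.sphere (0 : EuclideanSpace ℂ (Fin n)) 1, ‖A.toEuclideanLin x‖ = minSV A := by
  obtain ⟨i, hi⟩ := exists_eq_ciInf_of_finite
    (f := (posSemidef_conjTranspose_mul_self A).1.eigenvalues)
  refine ⟨(posSemidef_conjTranspose_mul_self A).1.eigenvectorBasis i, by simp, ?_⟩
  rw [norm_toEuclideanLin_eigenvectorBasis, hi, minSV]

lemma exists_mem_sphere_norm_mul_norm_eq_one {m n p q : ℕ} [NeZero n] [NeZero q]
    (A : Matrix (Fin m) (Fin n) ℂ) (B : Matrix (Fin p) (Fin q) ℂ)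
    (hmin : minSV A * minSV B ≤ 1) (hmax : 1 ≤ maxSV A * maxSV B) :
    ∃ x ∈ Metric.sphere (0 : EuclideanSpace ℂ (Fin n)) 1,
      ∃ y ∈ Metric.sphere (0 : EuclideanSpace ℂ (Fin q)) 1,
        ‖A.toEuclideanLin x‖ * ‖B.toEuclideanLin y‖ = 1 := by
  obtain ⟨x₀, hx₀, hAx₀⟩ := exists_mem_sphere_norm_toEuclideanLin_eq_minSV A
  obtain ⟨y₀, hy₀, hBy₀⟩ := exists_mem_sphere_norm_toEuclideanLin_eq_minSV B
  obtain ⟨x₁, hx₁, hAx₁⟩ := exists_mem_sphere_norm_toEuclideanLin_eq_maxSV A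
  obtain ⟨y₁, hy₁, hBy₁⟩ := exists_mem_sphere_norm_toEuclideanLin_eq_maxSV B
  have hS := (isConnected_sphere_euclideanSpace (ι := Fin n)).prod
    (isConnected_sphere_euclideanSpace (ι := Fin q)) |>.isPreconnected
  have hf : Continuous fun z : EuclideanSpace ℂ (Fin n) × EuclideanSpace ℂ (Fin q) ↦
      ‖A.toEuclideanLin z.1‖ * ‖B.toEuclideanLin z.2‖ := by
    have := A.toEuclideanLin.continuous_of_finiteDimensional
    have := B.toEuclideanLin.continuous_of_finiteDimensional
    fun_prop
  obtain ⟨⟨x, y⟩, ⟨hx, hy⟩, hxy⟩ := hS.intermediate_value (Set.mk_mem_prod hx₀ hy₀)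
    (Set.mk_mem_prod hx₁ hy₁) hf.continuousOn
    ⟨by simpa [hAx₀, hBy₀] using hmin, by simpa [hAx₁, hBy₁] using hmax⟩
  exact ⟨x, hx, y, hy, hxy⟩

theorem stmt16 {n : ℕ} (A B : Matrix (Fin n) (Fin n) ℂ)
    (h : ∀ U ∈ Matrix.unitaryGroup (Fin n) ℂ, ∀ V ∈ Matrix.unitaryGroup (Fin n) ℂ,
      (1 + U * A * V * B).det ≠ 0) :
    maxSV A * maxSV B < 1 ∨ 1 < minSV A * minSV B := by
  by_contra! ⟨hmax, hmin⟩
  rcases eq_zero_or_neZero n with rfl | _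
  · norm_num [maxSV_of_fin_zero] at hmax
  obtain ⟨y, hy, x, hx, hyx⟩ := exists_mem_sphere_norm_mul_norm_eq_one A B hmin hmax
  obtain ⟨U, hU, V, hV, hdet⟩ := exists_det_one_add_mul_eq_zero A B
    (mem_sphere_zero_iff_norm.mp hx) (mem_sphere_zero_iff_norm.mp hy) hyx
  exact h U hU V hV hdet
end

section
/- Let A, B ∈ M_n(ℂ) be such that there exists z on the unit circle with z A + z* A* ⪰ ε A* A for some ε > 0 and z* B + z B* ⪰ 0. Then det(I + T* A T S* B S) ≠ 0 for all invertible T, S ∈ M_n(ℂ). -/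
/-!
Suppose `(1 + A B) x = 0` with `x ≠ 0`, and put `y = B x`, so that `A y = -x ≠ 0`. Writing
`w = ⟪y, x⟫`, we get `⟪y, A y⟫ = -w` and `⟪x, B x⟫ = w̄`, hence the quadratic forms of
`z A + z̄ Aᴴ` at `y` and of `z̄ B + z Bᴴ` at `x` add up to zero. The first is at least
`ε ‖A y‖² > 0` and the second is nonnegative: contradiction. Both hypotheses survive the
congruences `A ↦ Tᴴ A T`, `B ↦ Sᴴ B S`, because the form of `z (Tᴴ A T) + z̄ (Tᴴ A T)ᴴ` at `y`
is the form of `z A + z̄ Aᴴ` at `T y`, and `Tᴴ A T y ≠ 0` forces `A (T y) ≠ 0`.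
-/

open Matrix ComplexOrder

namespace Matrix

variable {ι : Type*} [Fintype ι]

lemma star_dotProduct_conjTranspose_mulVec_s17 {R : Type*} [CommSemiring R] [StarRing R]
    (M : Matrix ι ι R) (v : ι → R) :
    star v ⬝ᵥ (Mᴴ *ᵥ v) = star (star v ⬝ᵥ (M *ᵥ v)) := by
  rw [dotProduct_mulVec, ← star_mulVec, star_dotProduct]

/-- The Hermitian matrix `z M + z̄ Mᴴ`, whose quadratic form is the form of the multiplier
`P = [[0, z I], [z̄ I, 0]]` on the graph `(v, M v)`. -/
def phaseForm (z : ℂ) (M : Matrix ι ι ℂ) : Matrix ι ι ℂ :=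
  z • M + starRingEnd ℂ z • Mᴴ

lemma phaseForm_conjTranspose_mul_mul (z : ℂ) (M T : Matrix ι ι ℂ) :
    phaseForm z (Tᴴ * M * T) = Tᴴ * phaseForm z M * T := by
  simp only [phaseForm, Matrix.mul_add, Matrix.add_mul, Matrix.mul_smul, Matrix.smul_mul,
    conjTranspose_mul, conjTranspose_conjTranspose, Matrix.mul_assoc]

lemma star_dotProduct_phaseForm_conjTranspose_mul_mul_mulVec (z : ℂ) (M T : Matrix ι ι ℂ)
    (v : ι → ℂ) :
    star v ⬝ᵥ (phaseForm z (Tᴴ * M * T) *ᵥ v) = star (T *ᵥ v) ⬝ᵥ (phaseForm z M *ᵥ (T *ᵥ v)) := by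
  rw [phaseForm_conjTranspose_mul_mul, ← mulVec_mulVec, ← mulVec_mulVec, dotProduct_mulVec,
    ← star_mulVec]

lemma star_dotProduct_phaseForm_mulVec (z : ℂ) (M : Matrix ι ι ℂ) (v : ι → ℂ) :
    star v ⬝ᵥ (phaseForm z M *ᵥ v) =
      z * (star v ⬝ᵥ (M *ᵥ v)) + starRingEnd ℂ z * star (star v ⬝ᵥ (M *ᵥ v)) := by
  simp only [phaseForm, add_mulVec, smul_mulVec, dotProduct_add, dotProduct_smul, smul_eq_mul,
    star_dotProduct_conjTranspose_mulVec_s17]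

lemma star_dotProduct_phaseForm_mulVec_pos {z : ℂ} {A : Matrix ι ι ℂ} {ε : ℝ} (hε : 0 < ε)
    (hA : (phaseForm z A - (ε : ℂ) • (Aᴴ * A)).PosSemidef) {v : ι → ℂ} (hv : A *ᵥ v ≠ 0) :
    0 < star v ⬝ᵥ (phaseForm z A *ᵥ v) := by
  have hgram : star v ⬝ᵥ ((Aᴴ * A) *ᵥ v) = star (A *ᵥ v) ⬝ᵥ (A *ᵥ v) := by
    rw [← mulVec_mulVec, dotProduct_mulVec, ← star_mulVec]
  have hnonneg := hA.dotProduct_mulVec_nonneg v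
  rw [sub_mulVec, dotProduct_sub, smul_mulVec, dotProduct_smul, hgram, smul_eq_mul,
    sub_nonneg] at hnonneg
  calc (0 : ℂ) < (ε : ℂ) * (star (A *ᵥ v) ⬝ᵥ (A *ᵥ v)) :=
        mul_pos (mod_cast hε) (dotProduct_star_self_pos_iff.mpr hv)
    _ ≤ _ := hnonneg

lemma mulVec_mulVec_eq_neg_of_one_add_mul_mulVec_eq_zero [DecidableEq ι] {A B : Matrix ι ι ℂ}
    {x : ι → ℂ} (hx : (1 + A * B) *ᵥ x = 0) : A *ᵥ (B *ᵥ x) = -x := by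
  rw [add_mulVec, one_mulVec, ← mulVec_mulVec] at hx
  exact eq_neg_of_add_eq_zero_right hx

lemma star_dotProduct_phaseForm_add_eq_zero {z : ℂ} {A B : Matrix ι ι ℂ} [DecidableEq ι]
    {x : ι → ℂ} (hx : (1 + A * B) *ᵥ x = 0) :
    star (B *ᵥ x) ⬝ᵥ (phaseForm z A *ᵥ (B *ᵥ x)) +
      star x ⬝ᵥ (phaseForm (starRingEnd ℂ z) B *ᵥ x) = 0 := by
  have hAy := mulVec_mulVec_eq_neg_of_one_add_mul_mulVec_eq_zero hx
  have hBx : star x ⬝ᵥ (B *ᵥ x) = star (star (B *ᵥ x) ⬝ᵥ x) := star_dotProduct _ _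
  simp only [star_dotProduct_phaseForm_mulVec, hAy, hBx, dotProduct_neg, star_neg, star_star,
    Complex.conj_conj]
  ring

theorem det_one_add_mul_ne_zero_of_phaseForm [DecidableEq ι] {z : ℂ} {A B : Matrix ι ι ℂ}
    (hA : ∀ v, A *ᵥ v ≠ 0 → 0 < star v ⬝ᵥ (phaseForm z A *ᵥ v))
    (hB : (phaseForm (starRingEnd ℂ z) B).PosSemidef) :
    (1 + A * B).det ≠ 0 := by
  intro hdet
  obtain ⟨x, hx0, hx⟩ := exists_mulVec_eq_zero_iff.mpr hdet
  have hAy : A *ᵥ (B *ᵥ x) ≠ 0 := by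
    rwa [mulVec_mulVec_eq_neg_of_one_add_mul_mulVec_eq_zero hx, neg_ne_zero]
  have hpos := hA _ hAy
  have hnonneg := hB.dotProduct_mulVec_nonneg x
  rw [eq_neg_of_add_eq_zero_right (star_dotProduct_phaseForm_add_eq_zero hx), neg_nonneg]
    at hnonneg
  exact hpos.not_ge hnonneg

end Matrix

theorem stmt17_general {n : ℕ} (A B : Matrix (Fin n) (Fin n) ℂ) (z : ℂ)
    (ε : ℝ) (hε : 0 < ε)
    (h1 : (z • A + (starRingEnd ℂ z) • Aᴴ - (ε : ℂ) • (Aᴴ * A)).PosSemidef)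
    (h2 : ((starRingEnd ℂ z) • B + z • Bᴴ).PosSemidef) :
    ∀ T S : Matrix (Fin n) (Fin n) ℂ, IsUnit T → IsUnit S →
      (1 + Tᴴ * A * T * (Sᴴ * B * S)).det ≠ 0 := by
  intro T S _ _
  refine det_one_add_mul_ne_zero_of_phaseForm (z := z) (fun v hv => ?_) ?_
  · have hTv : A *ᵥ (T *ᵥ v) ≠ 0 := by
      refine fun h => hv ?_
      rw [Matrix.mul_assoc, ← mulVec_mulVec, ← mulVec_mulVec, h, mulVec_zero]
    rw [star_dotProduct_phaseForm_conjTranspose_mul_mul_mulVec]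
    exact star_dotProduct_phaseForm_mulVec_pos hε h1 hTv
  · have hB : phaseForm (starRingEnd ℂ z) B = (starRingEnd ℂ z) • B + z • Bᴴ := by
      rw [phaseForm, Complex.conj_conj]
    rw [phaseForm_conjTranspose_mul_mul, hB]
    exact h2.conjTranspose_mul_mul_same S

theorem stmt17 {n : ℕ} (A B : Matrix (Fin n) (Fin n) ℂ) (z : ℂ) (hz : ‖z‖ = 1)
    (ε : ℝ) (hε : 0 < ε)
    (h1 : (z • A + (starRingEnd ℂ z) • Aᴴ - (ε : ℂ) • (Aᴴ * A)).PosSemidef)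
    (h2 : ((starRingEnd ℂ z) • B + z • Bᴴ).PosSemidef) :
    ∀ T S : Matrix (Fin n) (Fin n) ℂ, IsUnit T → IsUnit S →
      (1 + Tᴴ * A * T * (Sᴴ * B * S)).det ≠ 0 :=
  stmt17_general A B z ε hε h1 h2
end
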